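/- arXiv:1602.01932 — 5 statements merged into one kernel-verified Lean document; each statement's English description precedes it below -/
import Mathlib

section
/- Let f : H → ℝ be convex and continuous, x ∈ H, and γ, γ' > 0. Let y = Prox_{γf}(x) and ȳ = Prox_{γ'f}(x). Then ‖y − ȳ‖ ≤ (|γ' − γ|/γ')(‖x‖ + ‖ȳ‖). -/
open RealInnerProductSpace

lemma prox_var_ineq
    {H : Type*} [NormedAddCommGroup H] [InnerProductSpace ℝ H]
    (f : H → ℝ) (hf : ConvexOn ℝ Set.univ f)
    (x : H) (γ : ℝ) (hγ : 0 < γ) (y : H)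
    (hy : ∀ u : H, f y + (1 / (2 * γ)) * ‖x - y‖ ^ 2 ≤ f u + (1 / (2 * γ)) * ‖x - u‖ ^ 2)
    (u : H) : ⟪x - y, u - y⟫ ≤ γ * (f u - f y) := by
  have key : ∀ t : ℝ, 0 < t → t ≤ 1 →
      ⟪x - y, u - y⟫ ≤ γ * (f u - f y) + (t / 2) * ‖u - y‖ ^ 2 := by
    intro t ht ht1
    have hconv : f ((1 - t) • y + t • u) ≤ (1 - t) * f y + t * f u :=
      hf.2 (Set.mem_univ y) (Set.mem_univ u) (by linarith) (le_of_lt ht) (by ring)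
    have hmin := hy ((1 - t) • y + t • u)
    have hexp : x - ((1 - t) • y + t • u) = (x - y) - t • (u - y) := by
      module
    have hnorm : ‖x - ((1 - t) • y + t • u)‖ ^ 2
        = ‖x - y‖ ^ 2 - 2 * t * ⟪x - y, u - y⟫ + t ^ 2 * ‖u - y‖ ^ 2 := by
      rw [hexp, norm_sub_sq_real, real_inner_smul_right, norm_smul]
      simp [mul_pow, abs_of_pos ht]
      ring
    rw [hnorm] at hmin
    have h2γ : (0:ℝ) < 2 * γ := by linarith
    have := mul_le_mul_of_nonneg_left hmin (le_of_lt h2γ)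
    have hγne : (2*γ) * (1 / (2*γ)) = 1 := by field_simp
    nlinarith [mul_le_mul_of_nonneg_left hconv (le_of_lt h2γ), sq_nonneg t,
      mul_pos h2γ ht, sq_nonneg (‖u - y‖)]
  by_contra hcon
  push_neg at hcon
  set ε := ⟪x - y, u - y⟫ - γ * (f u - f y) with hε
  have hεpos : 0 < ε := by linarith
  have hk : (0:ℝ) ≤ ‖u - y‖ ^ 2 := sq_nonneg _
  set t := min 1 (ε / (‖u - y‖ ^ 2 + 1)) with htdef
  have htpos : 0 < t := lt_min one_pos (div_pos hεpos (by linarith))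
  have ht1 : t ≤ 1 := min_le_left _ _
  have := key t htpos ht1
  have htk : (t / 2) * ‖u - y‖ ^ 2 < ε := by
    have h1 : t ≤ ε / (‖u - y‖ ^ 2 + 1) := min_le_right _ _
    have h2 : t * (‖u - y‖ ^ 2 + 1) ≤ ε := by
      rw [← le_div_iff₀ (by linarith)]; exact h1
    nlinarith
  linarith

theorem prox_different_stepsizes
    {H : Type*} [NormedAddCommGroup H] [InnerProductSpace ℝ H] [CompleteSpace H]
    (f : H → ℝ) (hf : ConvexOn ℝ Set.univ f) (hfc : Continuous f)
    (x : H) (γ γ' : ℝ) (hγ : 0 < γ) (hγ' : 0 < γ') (y ybar : H)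
    (hy : ∀ u : H, f y + (1 / (2 * γ)) * ‖x - y‖ ^ 2 ≤ f u + (1 / (2 * γ)) * ‖x - u‖ ^ 2)
    (hybar : ∀ u : H, f ybar + (1 / (2 * γ')) * ‖x - ybar‖ ^ 2 ≤ f u + (1 / (2 * γ')) * ‖x - u‖ ^ 2) :
    ‖y - ybar‖ ≤ (|γ' - γ| / γ') * (‖x‖ + ‖ybar‖) := by
  have h1 := prox_var_ineq f hf x γ hγ y hy ybar
  have h2 := prox_var_ineq f hf x γ' hγ' ybar hybar y
  set n := ‖y - ybar‖ with hn
  set a := ⟪x - ybar, y - ybar⟫ with ha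
  have hsplit : ⟪x - y, ybar - y⟫ = -(a - n ^ 2) := by
    have : x - y = (x - ybar) - (y - ybar) := by abel
    rw [this, inner_sub_left]
    have h3 : ybar - y = -(y - ybar) := by abel
    rw [h3, inner_neg_right, inner_neg_right, real_inner_self_eq_norm_sq]
    ring
  -- monotonicity combination: γ' * inner1 + γ * inner2 ≤ 0
  have hmono : γ' * n ^ 2 ≤ (γ' - γ) * a := by
    have i1 : γ' * ⟪x - y, ybar - y⟫ ≤ γ' * (γ * (f ybar - f y)) :=
      mul_le_mul_of_nonneg_left h1 (le_of_lt hγ')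
    have i2 : γ * a ≤ γ * (γ' * (f y - f ybar)) :=
      mul_le_mul_of_nonneg_left h2 (le_of_lt hγ)
    rw [hsplit] at i1
    nlinarith
  have hcs : a ≤ ‖x - ybar‖ * n := real_inner_le_norm _ _
  have habs : (γ' - γ) * a ≤ |γ' - γ| * (‖x - ybar‖ * n) := by
    calc (γ' - γ) * a ≤ |(γ' - γ) * a| := le_abs_self _
    _ = |γ' - γ| * |a| := abs_mul _ _
    _ ≤ |γ' - γ| * (‖x - ybar‖ * n) :=
        mul_le_mul_of_nonneg_left (abs_real_inner_le_norm _ _) (abs_nonneg _)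
  have hfin : γ' * n ^ 2 ≤ |γ' - γ| * (‖x - ybar‖ * n) := le_trans hmono habs
  have hxy : ‖x - ybar‖ ≤ ‖x‖ + ‖ybar‖ := norm_sub_le _ _
  rcases eq_or_lt_of_le (norm_nonneg (y - ybar)) with h0 | h0
  · have : n = 0 := h0.symm
    rw [this]
    positivity
  · have step : n ≤ (|γ' - γ| / γ') * ‖x - ybar‖ := by
      rw [div_mul_eq_mul_div, le_div_iff₀ hγ']
      have : γ' * n ^ 2 = (γ' * n) * n := by ring
      nlinarith
    calc n ≤ (|γ' - γ| / γ') * ‖x - ybar‖ := step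
    _ ≤ (|γ' - γ| / γ') * (‖x‖ + ‖ybar‖) :=
        mul_le_mul_of_nonneg_left hxy (by positivity)
end

section
/- Let T : H → H be firmly nonexpansive with fixed point set Fix(T), let f : H → ℝ be convex and continuous, let α ∈ [0,1], γ > 0, and let x, v ∈ H. Define y = Prox_{γf}(x) and x⁺ = αv + (1 − α)T(y). Then for every z ∈ Fix(T), ‖x⁺ − z‖² ≤ α‖v − z‖² + ‖x − z‖² − ‖x − y‖² + 2γ(f(z) − f(y)) − (1 − α)‖y − T(y)‖². -/
local notation "⟪" x ", " y "⟫" => @inner ℝ _ _ x y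

theorem halpern_step_ineq
    {H : Type*} [NormedAddCommGroup H] [InnerProductSpace ℝ H] [CompleteSpace H]
    (T : H → H)
    (hT : ∀ a b : H,
      ‖T a - T b‖ ^ 2 + ‖(a - T a) - (b - T b)‖ ^ 2 ≤ ‖a - b‖ ^ 2)
    (f : H → ℝ) (hf : ConvexOn ℝ Set.univ f) (hfc : Continuous f)
    (α : ℝ) (hα : α ∈ Set.Icc (0 : ℝ) 1) (γ : ℝ) (hγ : 0 < γ)
    (x v y : H)
    (hy : ∀ u : H, f y + (1 / (2 * γ)) * ‖x - y‖ ^ 2 ≤ f u + (1 / (2 * γ)) * ‖x - u‖ ^ 2) :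
    ∀ z : H, T z = z →
      ‖(α • v + (1 - α) • T y) - z‖ ^ 2 ≤
        α * ‖v - z‖ ^ 2 + ‖x - z‖ ^ 2 - ‖x - y‖ ^ 2 + 2 * γ * (f z - f y)
          - (1 - α) * ‖y - T y‖ ^ 2 := by
  intro z hz
  obtain ⟨hα0, hα1⟩ := hα
  have h2γ : (0:ℝ) < 2 * γ := by linarith
  -- Step 1: inner product bound from prox property
  have hstep : ∀ t : ℝ, 0 < t → t ≤ 1 →
      2 * ⟪x - y, z - y⟫ ≤ 2 * γ * (f z - f y) + t * ‖z - y‖ ^ 2 := by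
    intro t ht ht1
    have hu := hy (y + t • (z - y))
    have hconv := hf.2 (Set.mem_univ y) (Set.mem_univ z)
      (by linarith : (0:ℝ) ≤ 1 - t) (le_of_lt ht) (by ring)
    have heq : (1 - t) • y + t • z = y + t • (z - y) := by module
    rw [heq] at hconv
    simp only [smul_eq_mul] at hconv
    have hdiff : x - (y + t • (z - y)) = (x - y) - t • (z - y) := by module
    have hnorm : ‖x - (y + t • (z - y))‖ ^ 2
        = ‖x - y‖ ^ 2 - 2 * t * ⟪x - y, z - y⟫ + t ^ 2 * ‖z - y‖ ^ 2 := by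
      rw [hdiff, norm_sub_sq_real, real_inner_smul_right, norm_smul]
      simp [mul_pow, sq_abs]
      ring
    rw [hnorm] at hu
    have h4 : (1 / (2 * γ)) * (2 * t * ⟪x - y, z - y⟫ - t ^ 2 * ‖z - y‖ ^ 2)
        ≤ t * (f z - f y) := by nlinarith [hu, hconv]
    rw [one_div, inv_mul_le_iff₀ h2γ] at h4
    have h5 : t * (2 * ⟪x - y, z - y⟫)
        ≤ t * (2 * γ * (f z - f y) + t * ‖z - y‖ ^ 2) := by nlinarith [h4]
    exact le_of_mul_le_mul_left h5 ht
  have key : ⟪x - y, z - y⟫ ≤ γ * (f z - f y) := by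
    have h2 : 2 * ⟪x - y, z - y⟫ ≤ 2 * γ * (f z - f y) := by
      refine le_of_forall_pos_le_add ?_
      intro ε hε
      set N := ‖z - y‖ ^ 2 with hN
      have hN0 : 0 ≤ N := sq_nonneg _
      have hden : (0:ℝ) < N + 1 := by linarith
      set t := min 1 (ε / (N + 1)) with htdef
      have ht0 : 0 < t := lt_min one_pos (div_pos hε hden)
      have ht1 : t ≤ 1 := min_le_left _ _
      have := hstep t ht0 ht1
      have htN : t * N ≤ ε := by
        have h6 : t ≤ ε / (N + 1) := min_le_right _ _
        have : t * N ≤ (ε / (N + 1)) * (N + 1) :=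
          mul_le_mul h6 (by linarith) hN0 (le_of_lt (div_pos hε hden))
        rw [div_mul_cancel₀ _ (ne_of_gt hden)] at this
        linarith
      linarith
    linarith
  -- Step 2: prox inequality
  have hexp : ‖x - z‖ ^ 2 = ‖x - y‖ ^ 2 + 2 * ⟪x - y, y - z⟫ + ‖y - z‖ ^ 2 := by
    have h7 : x - z = (x - y) + (y - z) := by abel
    rw [h7, norm_add_sq_real]
  have hinner : ⟪x - y, y - z⟫ = -⟪x - y, z - y⟫ := by
    have h8 : (y - z : H) = -(z - y) := by abel
    rw [h8, inner_neg_right]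
  have hprox : ‖y - z‖ ^ 2 ≤ ‖x - z‖ ^ 2 - ‖x - y‖ ^ 2 + 2 * γ * (f z - f y) := by
    rw [hinner] at hexp; linarith
  -- Step 3: firm nonexpansiveness at (y, z)
  have hfne : ‖T y - z‖ ^ 2 + ‖y - T y‖ ^ 2 ≤ ‖y - z‖ ^ 2 := by
    have := hT y z
    rw [hz] at this
    simpa using this
  -- Step 4: convexity of squared norm
  have hcomb : ‖(α • v + (1 - α) • T y) - z‖ ^ 2
      ≤ α * ‖v - z‖ ^ 2 + (1 - α) * ‖T y - z‖ ^ 2 := by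
    have h0 : (α • v + (1 - α) • T y) - z = α • (v - z) + (1 - α) • (T y - z) := by
      have hsum : α • (z:H) + (1 - α) • (z:H) = z := by module
      module
    rw [h0]
    have hexp2 := norm_add_sq_real (α • (v - z)) ((1 - α) • (T y - z))
    rw [real_inner_smul_left, real_inner_smul_right, norm_smul, norm_smul,
      Real.norm_eq_abs, Real.norm_eq_abs, abs_of_nonneg hα0,
      abs_of_nonneg (by linarith : (0:ℝ) ≤ 1 - α)] at hexp2
    nlinarith [real_inner_le_norm (v - z) (T y - z),
      mul_nonneg hα0 (by linarith : (0:ℝ) ≤ 1 - α),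
      sq_nonneg (‖v - z‖ - ‖T y - z‖), norm_nonneg (v - z), norm_nonneg (T y - z)]
  -- Combine
  have hR0 : (0:ℝ) ≤ ‖x - z‖ ^ 2 - ‖x - y‖ ^ 2 + 2 * γ * (f z - f y) := by
    nlinarith [sq_nonneg ‖y - z‖, hprox]
  nlinarith [hcomb, hfne, hprox, mul_nonneg hα0 hR0,
    mul_le_mul_of_nonneg_left hfne (by linarith : (0:ℝ) ≤ 1 - α),
    mul_le_mul_of_nonneg_left hprox (by linarith : (0:ℝ) ≤ 1 - α)]
end

section
/- Let f : H → ℝ be convex and continuous. Then for every x ∈ H, the subdifferential ∂f(x) = {u ∈ H : f(y) ≥ f(x) + ⟨y − x, u⟩ for all y ∈ H} is nonempty. -/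
open scoped RealInnerProductSpace

theorem subdifferential_nonempty
    {H : Type*} [NormedAddCommGroup H] [InnerProductSpace ℝ H] [CompleteSpace H]
    (f : H → ℝ) (hf : ConvexOn ℝ Set.univ f) (hfc : Continuous f) (x : H) :
    ∃ u : H, ∀ y : H, f x + ⟪y - x, u⟫ ≤ f y := by
  -- strict epigraph
  set S : Set (H × ℝ) := {p | f p.1 < p.2} with hS
  have hSconv : Convex ℝ S := by
    intro p hp q hq a b ha hb hab
    simp only [hS, Set.mem_setOf_eq] at *
    calc f (a • p.1 + b • q.1) ≤ a * f p.1 + b * f q.1 :=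
          hf.2 trivial trivial ha hb hab
      _ < a * p.2 + b * q.2 := by
          rcases eq_or_lt_of_le ha with h | h
          · rcases eq_or_lt_of_le hb with h' | h'
            · exfalso; rw [← h, ← h'] at hab; norm_num at hab
            · rw [← h]; simpa using (mul_lt_mul_of_pos_left hq h')
          · rcases eq_or_lt_of_le hb with h' | h'
            · rw [← h']; simpa using (mul_lt_mul_of_pos_left hp h)
            · exact add_lt_add (mul_lt_mul_of_pos_left hp h)
                (mul_lt_mul_of_pos_left hq h')
  have hSopen : IsOpen S := isOpen_lt (hfc.comp continuous_fst) continuous_snd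
  have hxS : (x, f x) ∉ S := by simp [hS]
  obtain ⟨L, hL⟩ := geometric_hahn_banach_open_point hSconv hSopen hxS
  set c : ℝ := L (0, 1) with hc
  have hdecomp : ∀ y : H, ∀ t : ℝ, L (y, t) = L (y, 0) + t * c := by
    intro y t
    have : (y, t) = (y, (0:ℝ)) + t • ((0:H), (1:ℝ)) := by
      simp [Prod.ext_iff]
    rw [this, map_add, map_smul]
    simp [hc]
  have hcneg : c < 0 := by
    have h1 := hL (x, f x + 1) (by simp [hS])
    rw [hdecomp x (f x + 1), hdecomp x (f x)] at h1
    linarith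
  -- key inequality
  have hkey : ∀ y : H, L (y, 0) + f y * c ≤ L (x, 0) + f x * c := by
    intro y
    refine le_of_forall_pos_le_add fun δ hδ => ?_
    set ε : ℝ := δ / (-c) with hε
    have hεpos : 0 < ε := div_pos hδ (by linarith)
    have h1 := hL (y, f y + ε) (by simp [hS, hεpos])
    rw [hdecomp y (f y + ε), hdecomp x (f x)] at h1
    have hcne : c ≠ 0 := ne_of_lt hcneg
    have : ε * (-c) = δ := by
      rw [hε]; field_simp
    nlinarith
  -- Riesz representative of y ↦ L (y, 0) / (-c)
  set φ : H →L[ℝ] ℝ := (-c)⁻¹ • (L.comp (ContinuousLinearMap.inl ℝ H ℝ)) with hφ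
  refine ⟨(InnerProductSpace.toDual ℝ H).symm φ, fun y => ?_⟩
  have hinner : ∀ z : H, ⟪z, (InnerProductSpace.toDual ℝ H).symm φ⟫ = φ z := by
    intro z
    rw [real_inner_comm]
    exact InnerProductSpace.toDual_symm_apply
  rw [hinner]
  have hφval : φ (y - x) = (L (y, 0) - L (x, 0)) * (-c)⁻¹ := by
    simp only [hφ, ContinuousLinearMap.smul_apply, ContinuousLinearMap.comp_apply,
      ContinuousLinearMap.inl_apply, map_sub, smul_eq_mul]
    ring
  rw [hφval]
  have h := hkey y
  have hncpos : (0:ℝ) < -c := by linarith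
  rw [← sub_nonneg]
  have : f y - (f x + (L (y, 0) - L (x, 0)) * (-c)⁻¹) =
      ((L (x, 0) + f x * c) - (L (y, 0) + f y * c)) * (-c)⁻¹ := by
    have hcne : c ≠ 0 := ne_of_lt hcneg
    field_simp
    ring
  rw [this]
  exact mul_nonneg (by linarith) (by positivity)
end

section
/- Let f : H → ℝ be convex and continuous and x ∈ H. Then there exists δ > 0 such that the set ∂f(B(x; δ)) = ⋃_{y ∈ B(x;δ)} ∂f(y) is bounded, where B(x; δ) is the closed ball with center x and radius δ. -/
open scoped RealInnerProductSpace

theorem subdifferential_locally_bounded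
    {H : Type*} [NormedAddCommGroup H] [InnerProductSpace ℝ H] [CompleteSpace H]
    (f : H → ℝ) (hf : ConvexOn ℝ Set.univ f) (hfc : Continuous f) (x : H) :
    ∃ δ > (0 : ℝ), ∃ M : ℝ,
      ∀ y ∈ Metric.closedBall x δ, ∀ u : H,
        (∀ z : H, f y + ⟪z - y, u⟫ ≤ f z) → ‖u‖ ≤ M := by
  obtain ⟨ε, hε, hcont⟩ := Metric.continuousAt_iff.mp (hfc.continuousAt (x := x)) 1 one_pos
  refine ⟨ε / 3, by linarith, 2 / (ε / 3), ?_⟩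
  intro y hy u hu
  rcases eq_or_ne u 0 with rfl | hu0
  · simp only [norm_zero]
    positivity
  · set δ := ε / 3 with hδ
    have hδpos : (0:ℝ) < δ := by positivity
    set z := y + (δ * ‖u‖⁻¹) • u with hz
    have hzx : dist z x < ε := by
      have hun : ‖u‖ ≠ 0 := norm_ne_zero_iff.mpr hu0
      have h1 : dist z y = δ := by
        have hpos : (0:ℝ) < δ * ‖u‖⁻¹ := by
          have : (0:ℝ) < ‖u‖ := norm_pos_iff.mpr hu0
          positivity
        rw [hz, dist_eq_norm, add_sub_cancel_left, norm_smul, Real.norm_eq_abs,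
          abs_of_pos hpos, mul_assoc, inv_mul_cancel₀ hun, mul_one]
      calc dist z x ≤ dist z y + dist y x := dist_triangle _ _ _
        _ ≤ δ + δ := by
            rw [h1]
            exact add_le_add le_rfl (Metric.mem_closedBall.mp hy)
        _ < ε := by rw [hδ]; linarith
    have hyx : dist y x < ε := lt_of_le_of_lt (Metric.mem_closedBall.mp hy) (by linarith)
    have hfz : |f z - f x| < 1 := by simpa [Real.dist_eq] using hcont hzx
    have hfy : |f y - f x| < 1 := by simpa [Real.dist_eq] using hcont hyx
    have hinner : ⟪z - y, u⟫ = δ * ‖u‖ := by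
      rw [hz, add_sub_cancel_left, real_inner_smul_left, real_inner_self_eq_norm_sq]
      field_simp [norm_ne_zero_iff.mpr hu0]
    have key := hu z
    rw [hinner] at key
    have h1 : f z - f x < 1 := (abs_lt.mp hfz).2
    have h2 : -1 < f y - f x := (abs_lt.mp hfy).1
    have hδu : δ * ‖u‖ ≤ 2 := by linarith
    rw [le_div_iff₀ hδpos]
    linarith [mul_comm δ ‖u‖]
end

section
/- Let T : H → H be firmly nonexpansive, f : H → ℝ convex and continuous, α ∈ [0,1], γ > 0, x ∈ H, y = Prox_{γf}(x), and x⁺ = αx + (1 − α)T(y). Then for every z ∈ Fix(T), ‖x⁺ − z‖² ≤ ‖x − z‖² − (1 − α)‖x − y‖² − (1 − α)‖y − T(y)‖² + 2(1 − α)γ(f(z) − f(y)). -/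
open scoped RealInnerProductSpace

set_option maxHeartbeats 800000 in
theorem km_step_ineq
    {H : Type*} [NormedAddCommGroup H] [InnerProductSpace ℝ H] [CompleteSpace H]
    (T : H → H)
    (hT : ∀ a b : H, ‖T a - T b‖ ^ 2 ≤ ⟪T a - T b, a - b⟫)
    (f : H → ℝ) (hf : ConvexOn ℝ Set.univ f) (hfc : Continuous f)
    (α : ℝ) (hα : α ∈ Set.Icc (0 : ℝ) 1) (γ : ℝ) (hγ : 0 < γ)
    (x y : H)
    (hy : ∀ u : H, f y + (1 / (2 * γ)) * ‖x - y‖ ^ 2 ≤ f u + (1 / (2 * γ)) * ‖x - u‖ ^ 2) :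
    ∀ z : H, T z = z →
      ‖(α • x + (1 - α) • T y) - z‖ ^ 2 ≤
        ‖x - z‖ ^ 2 - (1 - α) * ‖x - y‖ ^ 2 - (1 - α) * ‖y - T y‖ ^ 2
          + 2 * (1 - α) * γ * (f z - f y) := by
  intro z hz
  obtain ⟨hα0, hα1⟩ := hα
  have hγ' : γ ≠ 0 := ne_of_gt hγ
  -- Step 1: prox inequality  ⟪x - y, z - y⟫ ≤ γ * (f z - f y)
  have hstep : ∀ t : ℝ, 0 < t → t ≤ 1 →
      f y - f z + (1/γ) * ⟪x - y, z - y⟫ ≤ t * ‖z - y‖^2 / (2*γ) := by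
    intro t ht ht1
    have hu := hy (y + t • (z - y))
    have hconv : f (y + t • (z - y)) ≤ (1 - t) * f y + t * f z := by
      have h2 := hf.2 (Set.mem_univ y) (Set.mem_univ z)
        (show (0:ℝ) ≤ 1 - t by linarith) ht.le (show (1 - t) + t = 1 by ring)
      have he : y + t • (z - y) = (1 - t) • y + t • z := by
        rw [smul_sub, sub_smul, one_smul]; abel
      rw [he]; exact h2
    have hnorm : ‖x - (y + t • (z - y))‖^2
        = ‖x - y‖^2 - 2 * (t * ⟪x - y, z - y⟫) + t^2 * ‖z - y‖^2 := by
      have he : x - (y + t • (z - y)) = (x - y) - t • (z - y) := by abel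
      rw [he, norm_sub_sq_real, real_inner_smul_right, norm_smul]
      rw [mul_pow]
      simp [Real.norm_eq_abs, sq_abs]
    rw [hnorm] at hu
    have h2γ : (0:ℝ) < 2 * γ := by linarith
    have hthis : t * (f y - f z) + (1/(2*γ)) * (2 * (t * ⟪x - y, z - y⟫)) ≤
        (1/(2*γ)) * (t^2 * ‖z - y‖^2) := by nlinarith [hu, hconv]
    have hA : t * (f y - f z + (1/γ) * ⟪x - y, z - y⟫) ≤ t * (t * ‖z - y‖^2 / (2*γ)) := by
      have e1 : t * (f y - f z + (1/γ) * ⟪x - y, z - y⟫)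
          = t * (f y - f z) + (1/(2*γ)) * (2 * (t * ⟪x - y, z - y⟫)) := by
        field_simp
      have e2 : t * (t * ‖z - y‖^2 / (2*γ)) = (1/(2*γ)) * (t^2 * ‖z - y‖^2) := by
        field_simp
      rw [e1, e2]; exact hthis
    exact le_of_mul_le_mul_left hA ht
  have key : ⟪x - y, z - y⟫ ≤ γ * (f z - f y) := by
    have h0 : f y - f z + (1/γ) * ⟪x - y, z - y⟫ ≤ 0 := by
      refine le_of_forall_pos_le_add ?_
      intro ε hε
      set N := ‖z - y‖^2 with hNdef
      have hN : 0 ≤ N := sq_nonneg _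
      set t := min 1 (2*γ*ε/(N+1)) with htdef
      have ht0 : 0 < t := lt_min one_pos (by positivity)
      have ht1 : t ≤ 1 := min_le_left _ _
      have h := hstep t ht0 ht1
      have h2 : t ≤ 2*γ*ε/(N+1) := min_le_right _ _
      rw [le_div_iff₀ (by positivity : (0:ℝ) < N + 1)] at h2
      have htN : t * N / (2*γ) ≤ ε := by
        rw [div_le_iff₀ (by linarith : (0:ℝ) < 2*γ)]
        nlinarith [ht0.le]
      linarith
    have h1' : (1/γ) * ⟪x - y, z - y⟫ ≤ f z - f y := by linarith
    calc ⟪x - y, z - y⟫ = γ * ((1/γ) * ⟪x - y, z - y⟫) := by field_simp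
      _ ≤ γ * (f z - f y) := mul_le_mul_of_nonneg_left h1' hγ.le
  -- Step 2: firm nonexpansiveness
  set s := T y with hs
  have h1 : ‖s - z‖ ^ 2 ≤ ⟪s - z, y - z⟫ := by
    have h := hT y z; rw [hz] at h; exact h
  have hinner : ⟪s - z, y - z⟫ = (‖s - z‖^2 + ‖y - z‖^2 - ‖y - s‖^2) / 2 := by
    have h := norm_sub_sq_real (s - z) (y - z)
    have he : (s - z) - (y - z) = -(y - s) := by abel
    rw [he, norm_neg] at h
    linarith
  have hB : ‖s - z‖^2 ≤ ‖y - z‖^2 - ‖y - s‖^2 := by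
    rw [hinner] at h1; linarith
  -- Step 3: ‖y - z‖² ≤ ‖x - z‖² - ‖x - y‖² + 2γ(f z - f y)
  have hrev : ‖z - y‖^2 = ‖y - z‖^2 := by rw [norm_sub_rev]
  have hE : ‖y - z‖^2 ≤ ‖x - z‖^2 - ‖x - y‖^2 + 2*γ*(f z - f y) := by
    have hexp : ‖x - z‖^2 = ‖x - y‖^2 + 2*⟪x - y, y - z⟫ + ‖y - z‖^2 := by
      have h := norm_sub_sq_real (x - y) (x - z)
      have he : (x - y) - (x - z) = z - y := by abel
      rw [he] at h
      have hi : ⟪x - y, y - z⟫ = ⟪x - y, x - z⟫ - ⟪x - y, x - y⟫ := by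
        rw [← inner_sub_right]; congr 1; abel
      rw [hi, real_inner_self_eq_norm_sq]
      linarith [h, hrev]
    have hi2 : ⟪x - y, y - z⟫ = -⟪x - y, z - y⟫ := by
      rw [← inner_neg_right]; congr 1; abel
    nlinarith [key, hexp, hi2]
  -- Step 4: convex combination
  have hcomb : ‖(α • x + (1 - α) • s) - z‖ ^ 2 =
      α^2 * ‖x - z‖^2 + 2*(α*(1-α)*⟪x - z, s - z⟫) + (1-α)^2 * ‖s - z‖^2 := by
    have he : (α • x + (1 - α) • s) - z = α • (x - z) + (1 - α) • (s - z) := by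
      rw [smul_sub, smul_sub, sub_smul, sub_smul, one_smul, one_smul]; abel
    rw [he, ← sub_neg_eq_add, norm_sub_sq_real, real_inner_smul_left, inner_neg_right,
      real_inner_smul_right, norm_smul, norm_neg, norm_smul]
    simp only [Real.norm_eq_abs, mul_pow, sq_abs]
    ring
  have hC : 2 * ⟪x - z, s - z⟫ ≤ ‖x - z‖^2 + ‖s - z‖^2 := by
    have h := norm_sub_sq_real (x - z) (s - z)
    nlinarith [sq_nonneg ‖(x - z) - (s - z)‖]
  rw [hcomb]
  have h1α : (0:ℝ) ≤ 1 - α := by linarith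
  have hαα : (0:ℝ) ≤ α * (1 - α) := mul_nonneg hα0 h1α
  have hBE : ‖s - z‖^2 ≤ ‖x - z‖^2 - ‖x - y‖^2 + 2*γ*(f z - f y) - ‖y - s‖^2 := by
    linarith
  nlinarith [mul_le_mul_of_nonneg_left hC hαα, mul_le_mul_of_nonneg_left hBE h1α,
    sq_nonneg α, sq_nonneg (1-α)]
end
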